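/- arXiv:1901.01672 — 3 statements merged into one kernel-verified Lean document; each statement's English description precedes it below -/
import Mathlib

section
/- Let x_1, …, x_m ∈ ℝ^n, let (Z, C) be an initialization with C = 0 whose weight matrices satisfy ‖Z_k‖_2 ≤ s for every 1 ≤ k ≤ d, and let r ≥ 0. Then for the depth-d linear network, the empirical Rademacher sum over the Frobenius ball of radius r around the initialization satisfies E_ξ[ sup_{(W,B) : ‖(W,B)−(Z,C)‖_F ≤ r} Σ_{i=1}^m ξ_i f_{(W,B)}(x_i) ] ≤ d · (s + r + 1)^d · (max_i ‖x_i‖ + 1) · √m, where ξ = (ξ_1, …, ξ_m) is drawn uniformly from {−1, 1}^m. In particular the bound is independent of the width H. -/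
/-! Within distance `r` of the initialization every weight matrix satisfies
`‖W_k‖₂ ≤ ‖Z_k‖₂ + ‖W_k - Z_k‖_F ≤ s + r` and every bias `‖b_k‖ ≤ r`, so the linear network is
an affine map `x ↦ A x + v` with `‖A‖ ≤ (s + r)^d` and `‖v‖ ≤ d (s + r + 1)^d`. Hence
`∑ ξ_i f(x_i) = A (∑ ξ_i x_i) + (∑ ξ_i) v` is bounded, uniformly over the ball, by
`(s + r)^d ‖∑ ξ_i x_i‖ + d (s + r + 1)^d |∑ ξ_i|`. Since Rademacher signs are orthonormal
(`E[ξ_i ξ_j] = δ_ij`), Jensen's inequality gives `E ‖∑ ξ_i y_i‖ ≤ (∑ ‖y_i‖²)^{1/2} ≤ √m max ‖y_i‖`. -/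

open scoped BigOperators

noncomputable section

/-- Dimension of the `k`-th layer of a depth-`d` network with input dimension `n`
and `H` hidden units per layer: `dim 0 = n`, `dim d = 1`, and `H` in between. -/
def dim (n H d : ℕ) : ℕ → ℕ
  | 0 => n
  | (k + 1) => if k + 1 = d then 1 else H

/-- A parameter configuration of a depth-`d` feed-forward network. -/
structure Params (n H d : ℕ) where
  W : ∀ k : Fin d, Matrix (Fin (dim n H d (k + 1))) (Fin (dim n H d k)) ℝ
  b : ∀ k : Fin d, EuclideanSpace ℝ (Fin (dim n H d (k + 1)))

/-- Squared Frobenius norm of a matrix. -/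
def frobSq {p q : ℕ} (A : Matrix (Fin p) (Fin q) ℝ) : ℝ :=
  ∑ i, ∑ j, (A i j) ^ 2

/-- Frobenius norm of a matrix. -/
def frob {p q : ℕ} (A : Matrix (Fin p) (Fin q) ℝ) : ℝ := Real.sqrt (frobSq A)

/-- Spectral norm: operator norm of the associated map between Euclidean spaces. -/
def spec {p q : ℕ} (A : Matrix (Fin p) (Fin q) ℝ) : ℝ :=
  ‖LinearMap.toContinuousLinearMap (Matrix.toEuclideanLin A)‖

/-- `ℓ2` distance between two parameter configurations. -/
def paramDist {n H d : ℕ} (P Q : Params n H d) : ℝ :=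
  Real.sqrt (∑ k : Fin d, (frobSq (P.W k - Q.W k) + ‖P.b k - Q.b k‖ ^ 2))

/-- Coordinatewise ReLU. -/
def relu {p : ℕ} (v : EuclideanSpace ℝ (Fin p)) : EuclideanSpace ℝ (Fin p) :=
  WithLp.toLp 2 (fun i => max (v i) 0)

/-- Layer outputs of the ReLU network. -/
def layer {n H d : ℕ} (P : Params n H d) (x : EuclideanSpace ℝ (Fin n)) :
    (k : ℕ) → k ≤ d → EuclideanSpace ℝ (Fin (dim n H d k))
  | 0, _ => x
  | (k + 1), hk =>
      Matrix.toEuclideanLin (P.W ⟨k, hk⟩) (relu (layer P x k (Nat.le_of_succ_le hk)))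
        + P.b ⟨k, hk⟩

/-- Layer outputs of the linear network (no activation). -/
def linLayer {n H d : ℕ} (P : Params n H d) (x : EuclideanSpace ℝ (Fin n)) :
    (k : ℕ) → k ≤ d → EuclideanSpace ℝ (Fin (dim n H d k))
  | 0, _ => x
  | (k + 1), hk =>
      Matrix.toEuclideanLin (P.W ⟨k, hk⟩) (linLayer P x k (Nat.le_of_succ_le hk))
        + P.b ⟨k, hk⟩

lemma dim_last {n H d : ℕ} (hd : 0 < d) : dim n H d d = 1 := by
  cases d with
  | zero => omega
  | succ k => simp [dim]

/-- Real-valued output of the ReLU network. -/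
def netOut {n H d : ℕ} (hd : 0 < d) (P : Params n H d) (x : EuclideanSpace ℝ (Fin n)) : ℝ :=
  layer P x d le_rfl ⟨0, by rw [dim_last hd]; omega⟩

/-- Real-valued output of the linear network. -/
def linNetOut {n H d : ℕ} (hd : 0 < d) (P : Params n H d) (x : EuclideanSpace ℝ (Fin n)) : ℝ :=
  linLayer P x d le_rfl ⟨0, by rw [dim_last hd]; omega⟩

/-- Expectation over a Rademacher vector `ξ` drawn uniformly from `{-1,1}^m`. -/
def radExp (m : ℕ) (g : (Fin m → ℝ) → ℝ) : ℝ :=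
  (∑ ε : Fin m → Bool, g (fun i => if ε i then 1 else -1)) / 2 ^ m

section Rademacher

variable {m : ℕ}

lemma radExp_mono {f g : (Fin m → ℝ) → ℝ} (h : ∀ ξ, f ξ ≤ g ξ) : radExp m f ≤ radExp m g := by
  unfold radExp
  gcongr with ε
  exact h _

lemma radExp_add (f g : (Fin m → ℝ) → ℝ) :
    radExp m (fun ξ => f ξ + g ξ) = radExp m f + radExp m g := by
  simp only [radExp, Finset.sum_add_distrib, add_div]

lemma radExp_const_mul (c : ℝ) (f : (Fin m → ℝ) → ℝ) :
    radExp m (fun ξ => c * f ξ) = c * radExp m f := by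
  simp only [radExp, ← Finset.mul_sum, mul_div_assoc]

lemma radExp_sum {ι : Type*} (s : Finset ι) (f : ι → (Fin m → ℝ) → ℝ) :
    radExp m (fun ξ => ∑ k ∈ s, f k ξ) = ∑ k ∈ s, radExp m (f k) := by
  simp only [radExp, Finset.sum_div]
  exact Finset.sum_comm

lemma sq_radExp_le (f : (Fin m → ℝ) → ℝ) : radExp m f ^ 2 ≤ radExp m (fun ξ => f ξ ^ 2) := by
  have h := sum_div_card_sq_le_sum_sq_div_card (s := Finset.univ)
    (f := fun ε : Fin m → Bool => f (fun i => if ε i then 1 else -1))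
  simpa [radExp] using h

lemma radExp_apply_mul_apply (i j : Fin m) :
    radExp m (fun ξ => ξ i * ξ j) = if i = j then 1 else 0 := by
  unfold radExp
  split_ifs with hij
  · subst hij
    have hsq (ε : Fin m → Bool) : (if ε i then (1 : ℝ) else -1) * (if ε i then 1 else -1) = 1 := by
      cases ε i <;> norm_num
    simp [hsq]
  · -- flipping the `i`-th sign changes the sign of `ξ i * ξ j`
    rw [Finset.sum_ninvolution (fun ε => Function.update ε i (!ε i)), zero_div]
    · intro ε
      simp only [Function.update_self, Function.update_of_ne (Ne.symm hij)]
      cases ε i <;> cases ε j <;> norm_num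
    · intro ε _ h
      simpa using congrFun h i
    · simp
    · intro ε
      simp

variable {E : Type*} [NormedAddCommGroup E] [InnerProductSpace ℝ E]

lemma radExp_norm_sum_smul_sq (y : Fin m → E) :
    radExp m (fun ξ => ‖∑ i, ξ i • y i‖ ^ 2) = ∑ i, ‖y i‖ ^ 2 := by
  have hexpand (ξ : Fin m → ℝ) :
      ‖∑ i, ξ i • y i‖ ^ 2 = ∑ i, ∑ j, inner ℝ (y i) (y j) * (ξ i * ξ j) := by
    simp only [← real_inner_self_eq_norm_sq, sum_inner, inner_sum, real_inner_smul_left,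
      real_inner_smul_right]
    congr! 2 with i - j -
    rw [real_inner_comm]
    ring
  simp only [hexpand, radExp_sum, radExp_const_mul, radExp_apply_mul_apply, mul_ite, mul_one,
    mul_zero, Finset.sum_ite_eq, Finset.mem_univ, if_true, real_inner_self_eq_norm_sq]

theorem radExp_norm_sum_smul_le (y : Fin m → E) :
    radExp m (fun ξ => ‖∑ i, ξ i • y i‖) ≤ √(∑ i, ‖y i‖ ^ 2) := by
  refine (le_abs_self _).trans (Real.abs_le_sqrt ?_)
  rw [← radExp_norm_sum_smul_sq]
  exact sq_radExp_le _

theorem radExp_norm_sum_smul_le_mul_sqrt {y : Fin m → E} {M : ℝ} (hy : ∀ i, ‖y i‖ ≤ M) :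
    radExp m (fun ξ => ‖∑ i, ξ i • y i‖) ≤ M * √m := by
  refine (radExp_norm_sum_smul_le y).trans ?_
  rcases Nat.eq_zero_or_pos m with rfl | hm
  · simp
  have hM : 0 ≤ M := (norm_nonneg _).trans (hy ⟨0, hm⟩)
  calc √(∑ i, ‖y i‖ ^ 2) ≤ √(∑ _i : Fin m, M ^ 2) := by gcongr with i; exact hy i
    _ = M * √m := by simp [Real.sqrt_sq hM, mul_comm]

end Rademacher

section SpectralNorm

open scoped Matrix.Norms.L2Operator

variable {p q : ℕ}

lemma frobSq_nonneg (A : Matrix (Fin p) (Fin q) ℝ) : 0 ≤ frobSq A :=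
  Finset.sum_nonneg fun _ _ => Finset.sum_nonneg fun _ _ => sq_nonneg _

lemma spec_nonneg (A : Matrix (Fin p) (Fin q) ℝ) : 0 ≤ spec A := norm_nonneg _

lemma spec_eq_l2_opNorm (A : Matrix (Fin p) (Fin q) ℝ) : spec A = ‖A‖ := rfl

lemma spec_le_spec_add_spec_sub (A B : Matrix (Fin p) (Fin q) ℝ) :
    spec A ≤ spec B + spec (A - B) := by
  simp only [spec_eq_l2_opNorm]
  exact norm_le_norm_add_norm_sub' A B

lemma spec_le_frob (A : Matrix (Fin p) (Fin q) ℝ) : spec A ≤ frob A := by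
  refine ContinuousLinearMap.opNorm_le_bound _ (Real.sqrt_nonneg _) fun v => ?_
  simp only [LinearMap.coe_toContinuousLinearMap', EuclideanSpace.norm_eq, Real.norm_eq_abs,
    sq_abs, frob]
  rw [← Real.sqrt_mul (frobSq_nonneg A)]
  gcongr
  rw [frobSq, Finset.sum_mul]
  gcongr with i
  simpa [Matrix.mulVec, dotProduct] using
    Finset.sum_mul_sq_le_sq_mul_sq Finset.univ (A i) v

end SpectralNorm

section Network

variable {n H d : ℕ}

lemma paramDist_nonneg (P Q : Params n H d) : 0 ≤ paramDist P Q := Real.sqrt_nonneg _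

lemma paramDist_self (P : Params n H d) : paramDist P P = 0 := by
  simp [paramDist, frobSq]

lemma frobSq_sub_add_sq_norm_sub_le_paramDist_sq (P Q : Params n H d) (k : Fin d) :
    frobSq (P.W k - Q.W k) + ‖P.b k - Q.b k‖ ^ 2 ≤ paramDist P Q ^ 2 := by
  have hterm (j : Fin d) : 0 ≤ frobSq (P.W j - Q.W j) + ‖P.b j - Q.b j‖ ^ 2 :=
    add_nonneg (frobSq_nonneg _) (sq_nonneg _)
  rw [paramDist, Real.sq_sqrt (Finset.sum_nonneg fun j _ => hterm j)]
  exact Finset.single_le_sum (fun j _ => hterm j) (Finset.mem_univ k)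

lemma frob_sub_le_paramDist (P Q : Params n H d) (k : Fin d) :
    frob (P.W k - Q.W k) ≤ paramDist P Q := by
  refine (sq_le_sq₀ (Real.sqrt_nonneg _) (paramDist_nonneg P Q)).1 ?_
  rw [Real.sq_sqrt (frobSq_nonneg _)]
  linarith [frobSq_sub_add_sq_norm_sub_le_paramDist_sq P Q k, sq_nonneg ‖P.b k - Q.b k‖]

lemma norm_b_sub_le_paramDist (P Q : Params n H d) (k : Fin d) :
    ‖P.b k - Q.b k‖ ≤ paramDist P Q := by
  refine (sq_le_sq₀ (norm_nonneg _) (paramDist_nonneg P Q)).1 ?_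
  linarith [frobSq_sub_add_sq_norm_sub_le_paramDist_sq P Q k, frobSq_nonneg (P.W k - Q.W k)]

lemma spec_le_add_paramDist (P Q : Params n H d) (k : Fin d) :
    spec (P.W k) ≤ spec (Q.W k) + paramDist P Q :=
  (spec_le_spec_add_spec_sub _ _).trans <|
    add_le_add le_rfl ((spec_le_frob _).trans (frob_sub_le_paramDist P Q k))

theorem exists_linLayer_eq_affine (P : Params n H d) {t : ℝ} (ht : 0 ≤ t)
    (hW : ∀ k, spec (P.W k) ≤ t) (hb : ∀ k, ‖P.b k‖ ≤ t + 1) (k : ℕ) (hk : k ≤ d) :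
    ∃ (A : EuclideanSpace ℝ (Fin n) →L[ℝ] EuclideanSpace ℝ (Fin (dim n H d k)))
      (v : EuclideanSpace ℝ (Fin (dim n H d k))),
      (∀ x, linLayer P x k hk = A x + v) ∧ ‖A‖ ≤ t ^ k ∧ ‖v‖ ≤ k * (t + 1) ^ k := by
  induction k with
  | zero =>
    refine ⟨ContinuousLinearMap.id ℝ _, 0, fun x => ?_, ?_, by simp⟩
    · simp only [linLayer, add_zero]
      rfl
    · rw [pow_zero]
      exact ContinuousLinearMap.norm_id_le
  | succ k ih =>
    obtain ⟨A, v, hAv, hA, hv⟩ := ih (Nat.le_of_succ_le hk)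
    set L := LinearMap.toContinuousLinearMap (Matrix.toEuclideanLin (P.W ⟨k, hk⟩))
    have hL : ‖L‖ ≤ t := hW _
    refine ⟨L.comp A, L v + P.b ⟨k, hk⟩, fun x => ?_, ?_, ?_⟩
    · simp only [linLayer, hAv, map_add]
      exact add_assoc _ _ _
    · calc ‖L.comp A‖ ≤ ‖L‖ * ‖A‖ := L.opNorm_comp_le A
        _ ≤ t * t ^ k := by gcongr
        _ = t ^ (k + 1) := by ring
    · have hpow : 1 ≤ (t + 1) ^ k := one_le_pow₀ (by linarith)
      calc ‖L v + P.b ⟨k, hk⟩‖ ≤ ‖L‖ * ‖v‖ + (t + 1) := norm_add_le_of_le (L.le_opNorm v) (hb _)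
        _ ≤ t * (k * (t + 1) ^ k) + (t + 1) * (t + 1) ^ k := by gcongr; nlinarith
        _ ≤ (k + 1 : ℕ) * (t + 1) ^ (k + 1) := by
          push_cast
          nlinarith [pow_succ (t + 1) k, mul_nonneg (Nat.cast_nonneg k) (hpow.trans' zero_le_one)]

theorem sum_mul_linNetOut_le {m : ℕ} (hd : 0 < d) (x : Fin m → EuclideanSpace ℝ (Fin n))
    (P : Params n H d) {t : ℝ} (ht : 0 ≤ t) (hW : ∀ k, spec (P.W k) ≤ t)
    (hb : ∀ k, ‖P.b k‖ ≤ t + 1) (ξ : Fin m → ℝ) :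
    ∑ i, ξ i * linNetOut hd P (x i)
      ≤ t ^ d * ‖∑ i, ξ i • x i‖ + d * (t + 1) ^ d * |∑ i, ξ i| := by
  obtain ⟨A, v, hAv, hA, hv⟩ := exists_linLayer_eq_affine P ht hW hb d le_rfl
  set j : Fin (dim n H d d) := ⟨0, by rw [dim_last hd]; omega⟩
  have hsum : ∑ i, ξ i * linNetOut hd P (x i) = A (∑ i, ξ i • x i) j + (∑ i, ξ i) * v j := by
    simp only [linNetOut, hAv, map_sum, map_smul, PiLp.add_apply, WithLp.ofLp_sum,
      WithLp.ofLp_smul, Finset.sum_apply, Pi.smul_apply, smul_eq_mul, mul_add,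
      Finset.sum_add_distrib, Finset.sum_mul]
    rfl
  have hlin : A (∑ i, ξ i • x i) j ≤ t ^ d * ‖∑ i, ξ i • x i‖ :=
    calc A (∑ i, ξ i • x i) j ≤ ‖A (∑ i, ξ i • x i)‖ :=
          (Real.le_norm_self _).trans (PiLp.norm_apply_le _ j)
      _ ≤ ‖A‖ * ‖∑ i, ξ i • x i‖ := A.le_opNorm _
      _ ≤ t ^ d * ‖∑ i, ξ i • x i‖ := by gcongr
  have hbias : (∑ i, ξ i) * v j ≤ d * (t + 1) ^ d * |∑ i, ξ i| :=
    calc (∑ i, ξ i) * v j ≤ |∑ i, ξ i| * |v j| := abs_mul (∑ i, ξ i) (v j) ▸ le_abs_self _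
      _ ≤ |∑ i, ξ i| * ‖v‖ := by gcongr; simpa using PiLp.norm_apply_le v j
      _ ≤ d * (t + 1) ^ d * |∑ i, ξ i| := by rw [mul_comm]; gcongr
  rw [hsum]
  exact add_le_add hlin hbias

theorem iSup_sum_mul_linNetOut_le {m : ℕ} (hd : 0 < d)
    (x : Fin m → EuclideanSpace ℝ (Fin n)) (Z : Params n H d) (hC : ∀ k, Z.b k = 0) {s r : ℝ}
    (hs : ∀ k, spec (Z.W k) ≤ s) (hr : 0 ≤ r) (ξ : Fin m → ℝ) :
    ⨆ P : {P : Params n H d // paramDist P Z ≤ r}, ∑ i, ξ i * linNetOut hd P.1 (x i)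
      ≤ (s + r) ^ d * ‖∑ i, ξ i • x i‖ + d * (s + r + 1) ^ d * |∑ i, ξ i| := by
  have hs0 : 0 ≤ s := (spec_nonneg _).trans (hs ⟨0, hd⟩)
  have : Nonempty {P : Params n H d // paramDist P Z ≤ r} := ⟨⟨Z, (paramDist_self Z).trans_le hr⟩⟩
  refine ciSup_le fun ⟨P, hP⟩ =>
    sum_mul_linNetOut_le hd x P (by positivity) (fun k => ?_) (fun k => ?_) ξ
  · exact (spec_le_add_paramDist P Z k).trans (add_le_add (hs k) hP)
  · have := (norm_b_sub_le_paramDist P Z k).trans hP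
    rw [hC k, sub_zero] at this
    linarith

end Network

/-- width-independent Rademacher bound for linear networks within
distance `r` of an initialization with spectrally bounded weights. -/
theorem stmt0 {n H d m : ℕ} (hd : 0 < d)
    (x : Fin m → EuclideanSpace ℝ (Fin n))
    (Z : Params n H d) (hC : ∀ k, Z.b k = 0)
    (s r : ℝ) (hs : ∀ k, spec (Z.W k) ≤ s) (hr : 0 ≤ r) :
    radExp m (fun ξ =>
        ⨆ P : {P : Params n H d // paramDist P Z ≤ r},
          ∑ i, ξ i * linNetOut hd P.1 (x i))
      ≤ d * (s + r + 1) ^ d * ((⨆ i, ‖x i‖) + 1) * Real.sqrt m := by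
  set M := ⨆ i, ‖x i‖
  have hxM (i : Fin m) : ‖x i‖ ≤ M :=
    le_ciSup (f := fun i => ‖x i‖) (Set.finite_range _).bddAbove i
  have hM : 0 ≤ M := Real.iSup_nonneg fun i => norm_nonneg _
  have hs0 : 0 ≤ s := (spec_nonneg _).trans (hs ⟨0, hd⟩)
  have hsign : radExp m (fun ξ => |∑ i, ξ i|) ≤ 1 * √m := by
    simpa using radExp_norm_sum_smul_le_mul_sqrt (y := fun _ => (1 : ℝ)) (M := 1) (by simp)
  have hpow : (s + r) ^ d ≤ d * (s + r + 1) ^ d :=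
    (pow_le_pow_left₀ (by positivity) (by linarith) d).trans
      (le_mul_of_one_le_left (by positivity) (by exact_mod_cast hd))
  calc _ ≤ radExp m (fun ξ =>
          (s + r) ^ d * ‖∑ i, ξ i • x i‖ + d * (s + r + 1) ^ d * |∑ i, ξ i|) :=
        radExp_mono (iSup_sum_mul_linNetOut_le hd x Z hC hs hr)
    _ = (s + r) ^ d * radExp m (fun ξ => ‖∑ i, ξ i • x i‖)
          + d * (s + r + 1) ^ d * radExp m (fun ξ => |∑ i, ξ i|) := by
        rw [radExp_add, radExp_const_mul, radExp_const_mul]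
    _ ≤ (s + r) ^ d * (M * √m) + d * (s + r + 1) ^ d * (1 * √m) := by
        gcongr
        exact radExp_norm_sum_smul_le_mul_sqrt hxM
    _ ≤ (d * (s + r + 1) ^ d * M + d * (s + r + 1) ^ d) * √m := by
        nlinarith [mul_le_mul_of_nonneg_right hpow (mul_nonneg hM (Real.sqrt_nonneg (m : ℝ)))]
    _ = d * (s + r + 1) ^ d * (M + 1) * √m := by ring
end
end

section
/- Let d ≥ 3, H ≥ 1, n ≥ 1, and let Z_1 ∈ ℝ^{H×n}, Z_k ∈ ℝ^{H×H} for 1 < k < d, and Z_d ∈ ℝ^{1×H} be random matrices all of whose entries are independent Gaussian N(0, 1/H) random variables (Xavier initialization). Then for every t ∈ (0, 1), with probability at least 1 − 2d e^{−H t² / 8}, the product of squared Frobenius norms satisfies ∏_{k=1}^d ‖Z_k‖_F² ≥ (1 − t)^d · n · H^{d−2}. In particular, the ℓ2-norm measure ∏_{k=1}^d ‖Z_k‖_F² of the untrained network grows with the width H as Ω(H^{d−2}). -/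
open scoped BigOperators

noncomputable section

/-!
Each `‖Z_k‖_F²` is a sum of `m_k = dim_{k+1} · dim_k ≥ H` squares of independent `N(0, v)`
variables, `v = 1/H`. Since `E exp(-λ X²) = (1 + 2λv)^{-1/2}`, the lower-tail Chernoff bound at
`λ = t / (2(1-t)v)` gives `P(‖Z_k‖_F² ≤ (1-t) m_k v) ≤ (e^{t/2} √(1-t))^{m_k} ≤ e^{-m_k t²/8}`.
A union bound over the `d` layers and `∏_k m_k v = n H^{d-2}` finish the proof.
-/

open Real MeasureTheory ProbabilityTheory
open scoped NNReal

lemma exp_half_mul_sqrt_one_sub_le {t : ℝ} (ht0 : 0 ≤ t) (ht1 : t ≤ 1) :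
    exp (t / 2) * √(1 - t) ≤ exp (-t ^ 2 / 8) := by
  have hexp_neg : (1 - t / 2) ^ 2 ≤ exp (-t) := by
    rw [show exp (-t) = exp (-t / 2) ^ 2 by rw [← exp_nat_mul]; ring_nf]
    gcongr
    · linarith
    · linarith [add_one_le_exp (-t / 2)]
  have hexp_neg_sq : 1 - t ^ 2 / 4 ≤ exp (-t ^ 2 / 4) := by
    linarith [add_one_le_exp (-t ^ 2 / 4)]
  have hpoly : 1 - t ≤ (1 - t / 2) ^ 2 * (1 - t ^ 2 / 4) := by
    nlinarith [mul_nonneg (pow_nonneg ht0 3) (by linarith : 0 ≤ 4 - t)]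
  have hsq : exp t * (1 - t) ≤ exp (-t ^ 2 / 4) := by
    calc exp t * (1 - t) ≤ exp t * (exp (-t) * exp (-t ^ 2 / 4)) := by
          gcongr
          exact hpoly.trans (mul_le_mul hexp_neg hexp_neg_sq (by nlinarith) (exp_pos _).le)
      _ = exp (-t ^ 2 / 4) := by rw [← exp_add, ← exp_add]; ring_nf
  refine pow_le_pow_iff_left₀ (by positivity) (exp_pos _).le two_ne_zero |>.mp ?_
  calc (exp (t / 2) * √(1 - t)) ^ 2 = exp t * (1 - t) := by
        rw [mul_pow, sq_sqrt (by linarith), ← exp_nat_mul]; ring_nf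
    _ ≤ exp (-t ^ 2 / 4) := hsq
    _ = exp (-t ^ 2 / 8) ^ 2 := by rw [← exp_nat_mul]; ring_nf

-- For `1 ≤ 2 * s * v` both sides are junk `0`: the integrand is not integrable and `√` vanishes.
lemma mgf_sq_gaussianReal (v : ℝ≥0) (s : ℝ) :
    mgf (fun x ↦ x ^ 2) (gaussianReal 0 v) s = (√(1 - 2 * s * v))⁻¹ := by
  rcases eq_or_ne v 0 with rfl | hv
  · simp [mgf, gaussianReal_zero_var]
  have hv0 : (0 : ℝ) < v := by positivity
  have hdensity : ∀ x : ℝ, gaussianPDFReal 0 v x • exp (s * x ^ 2)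
      = (√(2 * π * v))⁻¹ * exp (-(1 / (2 * v) - s) * x ^ 2) := by
    intro x
    rw [gaussianPDFReal, smul_eq_mul, mul_assoc, ← exp_add]
    congr 2
    field_simp
    ring
  rw [mgf, integral_gaussianReal_eq_integral_smul hv]
  simp_rw [hdensity]
  rw [integral_const_mul, integral_gaussian, ← sqrt_inv, ← sqrt_mul (by positivity), ← sqrt_inv]
  congr 1
  field_simp

lemma mgf_sq_of_map_eq_gaussianReal {Ω : Type*} [MeasurableSpace Ω] {μ : Measure Ω} {X : Ω → ℝ}
    {v : ℝ≥0} (hX : μ.map X = gaussianReal 0 v) (s : ℝ) :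
    mgf (fun ω ↦ X ω ^ 2) μ s = (√(1 - 2 * s * v))⁻¹ := by
  have hXm : AEMeasurable X μ := .of_map_ne_zero (by simp [hX, IsProbabilityMeasure.ne_zero])
  rw [show (fun ω ↦ X ω ^ 2) = (fun x ↦ x ^ 2) ∘ X from rfl, ← mgf_map hXm (by fun_prop), hX,
    mgf_sq_gaussianReal]

lemma integrable_exp_mul_of_nonpos {Ω : Type*} [MeasurableSpace Ω] {μ : Measure Ω}
    [IsFiniteMeasure μ] {Y : Ω → ℝ} (hY : AEMeasurable Y μ) (hY0 : ∀ ω, 0 ≤ Y ω) {s : ℝ}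
    (hs : s ≤ 0) : Integrable (fun ω ↦ exp (s * Y ω)) μ := by
  refine (integrable_const (1 : ℝ)).mono' (hY.const_mul s).exp.aestronglyMeasurable
    (ae_of_all _ fun ω ↦ ?_)
  rw [norm_of_nonneg (exp_pos _).le, exp_le_one_iff]
  exact mul_nonpos_of_nonpos_of_nonneg hs (hY0 ω)

lemma measureReal_sum_sq_le_le_exp {Ω ι : Type*} [MeasurableSpace Ω] [Fintype ι] {μ : Measure Ω}
    {X : ι → Ω → ℝ} (hindep : iIndepFun X μ) {v : ℝ≥0} (hv : v ≠ 0)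
    (hmap : ∀ i, μ.map (X i) = gaussianReal 0 v) {t : ℝ} (ht0 : 0 ≤ t) (ht1 : t < 1) :
    μ.real {ω | ∑ i, X i ω ^ 2 ≤ (1 - t) * Fintype.card ι * v}
      ≤ exp (-(Fintype.card ι * t ^ 2 / 8)) := by
  have := hindep.isProbabilityMeasure
  have hXm : ∀ i, AEMeasurable (X i) μ := fun i ↦
    AEMeasurable.of_map_ne_zero (by simp [hmap, (IsProbabilityMeasure.ne_zero _)])
  set Q : ι → Ω → ℝ := fun i ω ↦ X i ω ^ 2
  have hQm : ∀ i, AEMeasurable (Q i) μ := fun i ↦ (hXm i).pow_const 2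
  have hQindep : iIndepFun Q μ := hindep.comp (fun _ x ↦ x ^ 2) fun _ ↦ by fun_prop
  set l : ℝ := t / (2 * (1 - t) * v)
  have hv0 : (0 : ℝ) < v := by positivity
  have h1t : 0 < 1 - t := by linarith
  have hl : 0 ≤ l := by positivity
  have hl_v : 1 - 2 * -l * v = (1 - t)⁻¹ := by
    simp only [l]
    field_simp
    ring
  have hmgf : ∀ i, mgf (Q i) μ (-l) = √(1 - t) := fun i ↦ by
    rw [mgf_sq_of_map_eq_gaussianReal (hmap i), hl_v, sqrt_inv, inv_inv]
  have hint : Integrable (fun ω ↦ exp (-l * (∑ i, Q i) ω)) μ :=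
    integrable_exp_mul_of_nonpos (Finset.univ.aemeasurable_sum fun i _ ↦ hQm i)
      (fun ω ↦ by simpa [Q] using Finset.sum_nonneg fun i _ ↦ sq_nonneg (X i ω)) (neg_nonpos.2 hl)
  have hchernoff := measure_le_le_exp_mul_mgf ((1 - t) * Fintype.card ι * v) (neg_nonpos.2 hl) hint
  rw [hQindep.mgf_sum₀ hQm, Finset.prod_congr rfl fun i _ ↦ hmgf i, Finset.prod_const] at hchernoff
  have hexp : exp (- -l * ((1 - t) * Fintype.card ι * v)) = exp (t / 2) ^ Fintype.card ι := by
    rw [← exp_nat_mul]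
    congr 1
    simp only [l]
    field_simp
  rw [hexp, Finset.card_univ, ← mul_pow] at hchernoff
  calc μ.real {ω | ∑ i, X i ω ^ 2 ≤ (1 - t) * Fintype.card ι * v}
      = μ.real {ω | (∑ i, Q i) ω ≤ (1 - t) * Fintype.card ι * v} := by simp [Q, Finset.sum_apply]
    _ ≤ (exp (t / 2) * √(1 - t)) ^ Fintype.card ι := hchernoff
    _ ≤ exp (-t ^ 2 / 8) ^ Fintype.card ι := by
        gcongr
        exact exp_half_mul_sqrt_one_sub_le ht0 ht1.le
    _ = exp (-(Fintype.card ι * t ^ 2 / 8)) := by rw [← exp_nat_mul]; ring_nf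

lemma measureReal_frobSq_le_le_exp {Ω : Type*} [MeasurableSpace Ω] {μ : Measure Ω} {p q : ℕ}
    {W : Ω → Matrix (Fin p) (Fin q) ℝ}
    (hindep : iIndepFun (fun e : Fin p × Fin q ↦ fun ω ↦ W ω e.1 e.2) μ) {v : ℝ≥0} (hv : v ≠ 0)
    (hmap : ∀ i j, μ.map (fun ω ↦ W ω i j) = gaussianReal 0 v) {t : ℝ} (ht0 : 0 ≤ t)
    (ht1 : t < 1) :
    μ.real {ω | frobSq (W ω) ≤ (1 - t) * (p * q) * v} ≤ exp (-(p * q * t ^ 2 / 8)) := by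
  simpa [frobSq, Fintype.sum_prod_type, mul_assoc] using
    measureReal_sum_sq_le_le_exp hindep hv (fun e ↦ hmap e.1 e.2) ht0 ht1

lemma one_sub_card_mul_le_measureReal_iInter {Ω ι : Type*} [MeasurableSpace Ω] {μ : Measure Ω}
    [IsProbabilityMeasure μ] [Fintype ι] {s : ι → Set Ω} {B : ℝ} (hs : ∀ i, μ.real (s i)ᶜ ≤ B) :
    1 - Fintype.card ι * B ≤ μ.real (⋂ i, s i) := by
  have hcover : 1 ≤ μ.real (⋂ i, s i) + μ.real (⋃ i, (s i)ᶜ) := by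
    calc 1 = μ.real Set.univ := probReal_univ.symm
      _ = μ.real ((⋂ i, s i) ∪ ⋃ i, (s i)ᶜ) := by rw [← Set.compl_iInter, Set.union_compl_self]
      _ ≤ _ := measureReal_union_le _ _
  have hsum := Finset.sum_le_card_nsmul Finset.univ _ B fun i _ ↦ hs i
  rw [nsmul_eq_mul, Finset.card_univ] at hsum
  linarith [measureReal_iUnion_fintype_le (μ := μ) fun i ↦ (s i)ᶜ]

lemma dim_of_pos_of_lt {n H d k : ℕ} (hk0 : 0 < k) (hkd : k < d) : dim n H d k = H := by
  obtain ⟨j, rfl⟩ := Nat.exists_eq_add_of_lt hk0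
  simp only [zero_add, dim]
  rw [if_neg (by omega)]

lemma prod_dim_succ_mul_dim {n H d : ℕ} (hd : 0 < d) :
    ∏ k : Fin d, dim n H d (k + 1) * dim n H d k = n * H ^ (2 * (d - 1)) := by
  obtain ⟨e, rfl⟩ : ∃ e, d = e + 1 := ⟨d - 1, by omega⟩
  have hinner : ∏ k ∈ Finset.range e, dim n H (e + 1) (k + 1) = H ^ e := by
    rw [Finset.prod_congr rfl fun k hk ↦ dim_of_pos_of_lt (by omega) (by simp at hk; omega),
      Finset.prod_const, Finset.card_range]
  rw [Fin.prod_univ_eq_prod_range (fun k ↦ dim n H (e + 1) (k + 1) * dim n H (e + 1) k),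
    Finset.prod_mul_distrib, Finset.prod_range_succ, Finset.prod_range_succ', hinner]
  simp only [dim, if_true, Nat.add_sub_cancel]
  ring

lemma prod_dim_succ_mul_dim_div {n H d : ℕ} (hd : 2 ≤ d) (hH : H ≠ 0) :
    ∏ k : Fin d, (dim n H d (k + 1) * dim n H d k : ℝ) / H = n * (H : ℝ) ^ (d - 2) := by
  rw [Finset.prod_div_distrib, Finset.prod_const, Finset.card_univ, Fintype.card_fin]
  norm_cast
  rw [prod_dim_succ_mul_dim (by omega), show 2 * (d - 1) = (d - 2) + d by omega, pow_add]
  push_cast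
  field_simp

lemma le_dim_succ_mul_dim {n H d k : ℕ} (hd : 2 ≤ d) (hn : 1 ≤ n) (hkd : k < d) :
    H ≤ dim n H d (k + 1) * dim n H d k := by
  rcases Nat.lt_or_ge (k + 1) d with hk | hk
  · rw [dim_of_pos_of_lt k.succ_pos hk]
    rcases k.eq_zero_or_pos with rfl | hk0
    · exact Nat.le_mul_of_pos_right H hn
    · rw [dim_of_pos_of_lt hk0 hkd]
      exact Nat.le_mul_self H
  · rw [show k + 1 = d by omega, dim_last (by omega), dim_of_pos_of_lt (by omega) hkd, one_mul]

open MeasureTheory ProbabilityTheory in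
/-- for Xavier-initialized weights, the product of squared Frobenius
norms is at least `(1-t)^d * n * H^(d-2)` with probability `1 - 2d e^{-Ht²/8}`. -/
theorem stmt4 {Ω : Type*} [MeasurableSpace Ω] (μ : Measure Ω) [IsProbabilityMeasure μ]
    {n H d : ℕ} (hd : 3 ≤ d) (hH : 1 ≤ H) (hn : 1 ≤ n)
    (Z : Ω → Params n H d)
    (hindep : iIndepFun
      (fun (e : Σ k : Fin d, Fin (dim n H d ((k : ℕ) + 1)) × Fin (dim n H d k)) =>
        fun ω => (Z ω).W e.1 e.2.1 e.2.2) μ)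
    (hgauss : ∀ (k : Fin d) i j,
      Measure.map (fun ω => (Z ω).W k i j) μ = gaussianReal 0 ((H : NNReal)⁻¹))
    (t : ℝ) (ht0 : 0 < t) (ht1 : t < 1) :
    ENNReal.ofReal (1 - 2 * d * Real.exp (-((H : ℝ) * t ^ 2) / 8))
      ≤ μ {ω | (1 - t) ^ d * n * (H : ℝ) ^ (d - 2) ≤ ∏ k, frobSq ((Z ω).W k)} := by
  set v : ℝ≥0 := (H : ℝ≥0)⁻¹
  have hv : v ≠ 0 := inv_ne_zero (by exact_mod_cast (by omega : H ≠ 0))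
  set m : Fin d → ℝ := fun k ↦ dim n H d (k + 1) * dim n H d k
  set good : Fin d → Set Ω := fun k ↦ {ω | (1 - t) * (m k / H) ≤ frobSq ((Z ω).W k)}
  have hbad : ∀ k, μ.real (good k)ᶜ ≤ exp (-((H : ℝ) * t ^ 2) / 8) := fun k ↦ calc
    μ.real (good k)ᶜ ≤ μ.real {ω | frobSq ((Z ω).W k) ≤ (1 - t) * m k * v} :=
      measureReal_mono fun ω hω ↦ by
        simp only [good, Set.mem_compl_iff, Set.mem_ofPred_eq, not_le] at hω
        simpa [v, div_eq_mul_inv, mul_assoc] using hω.le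
    _ ≤ exp (-(m k * t ^ 2 / 8)) :=
      measureReal_frobSq_le_le_exp (hindep.precomp sigma_mk_injective) hv (hgauss k) ht0.le ht1
    _ ≤ exp (-((H : ℝ) * t ^ 2) / 8) := by
      have : (H : ℝ) ≤ m k := by
        simp only [m]; exact_mod_cast le_dim_succ_mul_dim (H := H) (by omega) hn k.2
      refine exp_le_exp.2 ?_
      nlinarith [mul_le_mul_of_nonneg_right this (sq_nonneg t)]
  have hgood : ⋂ k, good k ⊆
      {ω | (1 - t) ^ d * n * (H : ℝ) ^ (d - 2) ≤ ∏ k, frobSq ((Z ω).W k)} := fun ω hω ↦ by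
    have h1t : 0 ≤ 1 - t := by linarith
    calc (1 - t) ^ d * n * (H : ℝ) ^ (d - 2) = ∏ k, (1 - t) * (m k / H) := by
          rw [Finset.prod_mul_distrib, Finset.prod_const, Finset.card_univ, Fintype.card_fin,
            mul_assoc, prod_dim_succ_mul_dim_div (by omega) (by omega)]
      _ ≤ ∏ k, frobSq ((Z ω).W k) :=
          Finset.prod_le_prod (fun k _ ↦ by positivity) fun k _ ↦ Set.mem_iInter.1 hω k
  refine ENNReal.ofReal_le_of_le_toReal ?_
  calc 1 - 2 * d * exp (-((H : ℝ) * t ^ 2) / 8) ≤ 1 - d * exp (-((H : ℝ) * t ^ 2) / 8) := by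
        nlinarith [exp_pos (-((H : ℝ) * t ^ 2) / 8)]
    _ ≤ μ.real (⋂ k, good k) := by simpa using one_sub_card_mul_le_measureReal_iInter hbad
    _ ≤ _ := measureReal_mono hgood
end
end

section
/- Fix a depth-d ReLU network's parameters (W, B) and an input x ∈ ℝ^n, fix a layer index 1 ≤ k ≤ d − 1, and suppose that every coordinate of f^{(j)}_{(W,B)}(x) is nonzero for each j with k ≤ j ≤ d − 1 (so the activation pattern is locally constant). Then the map W_k ↦ f_{(W,B)}(x) (all other parameters held fixed) is Fréchet differentiable at W_k, and the operator norm of its derivative (with the Frobenius norm on the domain of matrices) is at most ( ∏_{j=k+1}^d ‖W_j‖_2 ) · ‖ f^{(k−1)}_{(W,B)}(x) ‖. In particular, if ‖Z_j‖_2 ≤ s for all j and ‖(W,B) − (Z,C)‖_F ≤ r with C = 0, this gradient norm is at most (s + r)^{d−k} ‖ f^{(k−1)}_{(W,B)}(x) ‖, a bound independent of the width H. -/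
open scoped BigOperators

noncomputable section

attribute [local instance] Matrix.frobeniusSeminormedAddCommGroup
  Matrix.frobeniusNormedAddCommGroup Matrix.frobeniusNormedSpace

/-!
Once the activation pattern is frozen from layer `κ + 1` on, `relu` agrees near each of those
layer outputs with the diagonal `0/1` projection `D_j` onto its positive coordinates. Near `W_κ`
the output is then a composition of affine maps, with derivative
`M ↦ W_{d-1} D_{d-2} W_{d-2} ⋯ D_{κ+1} W_{κ+1} (M relu(f_κ))`. Each `D_j` has norm at most `1`,
and `M ↦ M u` has norm at most `‖u‖` for the Frobenius norm on `M`, which gives the product bound.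
For the width-free bound, `‖W_j‖₂ ≤ ‖Z_j‖₂ + ‖W_j - Z_j‖_F ≤ s + r`.
-/

-- With the Frobenius norm on matrices as a local instance, instance search does not find the
-- operator norm on continuous linear maps out of a matrix space; it has to be named.
local notation "‖" f "‖ₒₚ" => @Norm.norm _ ContinuousLinearMap.hasOpNorm f

section Matrix

variable {𝕜 : Type*} [RCLike 𝕜] {m n : Type*} [Fintype m] [Fintype n] [DecidableEq n]

lemma norm_toEuclideanLin_le_frobenius (A : Matrix m n 𝕜) (v : EuclideanSpace 𝕜 n) :
    ‖Matrix.toEuclideanLin A v‖ ≤ ‖A‖ * ‖v‖ := by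
  have h := Matrix.frobenius_norm_mul A (Matrix.replicateCol Unit v.ofLp)
  rwa [← Matrix.replicateCol_mulVec, Matrix.frobenius_norm_replicateCol,
    Matrix.frobenius_norm_replicateCol] at h

def mulVecCLM (u : EuclideanSpace 𝕜 n) : Matrix m n 𝕜 →L[𝕜] EuclideanSpace 𝕜 m :=
  LinearMap.toContinuousLinearMap
    { toFun := fun M => Matrix.toEuclideanLin M u
      map_add' := fun A B => by rw [map_add]; rfl
      map_smul' := fun c A => by rw [map_smul]; rfl }

lemma norm_mulVecCLM_le (u : EuclideanSpace 𝕜 n) :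
    ‖(mulVecCLM u : Matrix m n 𝕜 →L[𝕜] EuclideanSpace 𝕜 m)‖ₒₚ ≤ ‖u‖ :=
  ContinuousLinearMap.opNorm_le_bound _ (norm_nonneg u) fun M =>
    (norm_toEuclideanLin_le_frobenius M u).trans_eq (mul_comm _ _)

end Matrix

lemma spec_le_frobenius {p q : ℕ} (A : Matrix (Fin p) (Fin q) ℝ) : spec A ≤ ‖A‖ :=
  ContinuousLinearMap.opNorm_le_bound _ (norm_nonneg A) (norm_toEuclideanLin_le_frobenius A)

lemma spec_add_le {p q : ℕ} (A B : Matrix (Fin p) (Fin q) ℝ) :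
    spec (A + B) ≤ spec A + spec B := by
  simp only [spec, map_add]
  exact norm_add_le _ _

lemma spec_le_spec_add_frobenius {p q : ℕ} (A B : Matrix (Fin p) (Fin q) ℝ) :
    spec A ≤ spec B + ‖A - B‖ :=
  calc spec A = spec (B + (A - B)) := by rw [add_sub_cancel]
    _ ≤ spec B + spec (A - B) := spec_add_le B (A - B)
    _ ≤ spec B + ‖A - B‖ := by gcongr; exact spec_le_frobenius _

lemma frobSq_eq_sq_norm {p q : ℕ} (A : Matrix (Fin p) (Fin q) ℝ) : frobSq A = ‖A‖ ^ 2 := by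
  rw [Matrix.frobenius_norm_def, ← Real.rpow_natCast, ← Real.rpow_mul (by positivity)]
  norm_num [frobSq]

lemma norm_sub_le_paramDist {n H d : ℕ} (P Q : Params n H d) (k : Fin d) :
    ‖P.W k - Q.W k‖ ≤ paramDist P Q := by
  rw [paramDist]
  simp only [frobSq_eq_sq_norm]
  apply Real.le_sqrt_of_sq_le
  calc ‖P.W k - Q.W k‖ ^ 2 ≤ ‖P.W k - Q.W k‖ ^ 2 + ‖P.b k - Q.b k‖ ^ 2 :=
        le_add_of_nonneg_right (sq_nonneg _)
    _ ≤ ∑ k : Fin d, (‖P.W k - Q.W k‖ ^ 2 + ‖P.b k - Q.b k‖ ^ 2) :=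
        Finset.single_le_sum (f := fun k => ‖P.W k - Q.W k‖ ^ 2 + ‖P.b k - Q.b k‖ ^ 2)
          (fun j _ => by positivity) (Finset.mem_univ k)

lemma spec_le_of_paramDist_le {n H d : ℕ} {P Z : Params n H d} {s r : ℝ}
    (hZ : ∀ k, spec (Z.W k) ≤ s) (hPZ : paramDist P Z ≤ r) (k : Fin d) :
    spec (P.W k) ≤ s + r :=
  (spec_le_spec_add_frobenius (P.W k) (Z.W k)).trans
    (add_le_add (hZ k) ((norm_sub_le_paramDist P Z k).trans hPZ))

lemma EuclideanSpace.norm_le_norm_of_abs_le {ι : Type*} [Fintype ι] {u w : EuclideanSpace ℝ ι}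
    (h : ∀ i, |u i| ≤ |w i|) : ‖u‖ ≤ ‖w‖ := by
  simp only [EuclideanSpace.norm_eq, Real.norm_eq_abs]
  exact Real.sqrt_le_sqrt (Finset.sum_le_sum fun i _ => pow_le_pow_left₀ (abs_nonneg _) (h i) 2)

section ReLU

variable {p : ℕ}

lemma norm_relu_le (v : EuclideanSpace ℝ (Fin p)) : ‖relu v‖ ≤ ‖v‖ :=
  EuclideanSpace.norm_le_norm_of_abs_le fun i => abs_max_le_max_abs_abs.trans (by simp)

/-- The derivative of `relu` at `v`, provided no coordinate of `v` vanishes. -/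
def reluDeriv (v : EuclideanSpace ℝ (Fin p)) :
    EuclideanSpace ℝ (Fin p) →L[ℝ] EuclideanSpace ℝ (Fin p) :=
  LinearMap.toContinuousLinearMap
    (Matrix.toEuclideanLin (Matrix.diagonal fun i => if 0 < v i then 1 else 0))

lemma reluDeriv_apply (v w : EuclideanSpace ℝ (Fin p)) (i : Fin p) :
    reluDeriv v w i = if 0 < v i then w i else 0 := by
  simp [reluDeriv, Matrix.toLpLin_apply, Matrix.mulVec_diagonal]

lemma norm_reluDeriv_le (v : EuclideanSpace ℝ (Fin p)) : ‖reluDeriv v‖ ≤ 1 :=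
  ContinuousLinearMap.opNorm_le_bound _ zero_le_one fun w => by
    rw [one_mul]
    refine EuclideanSpace.norm_le_norm_of_abs_le fun i => ?_
    rw [reluDeriv_apply]
    split_ifs <;> simp

lemma relu_eventuallyEq_reluDeriv {v : EuclideanSpace ℝ (Fin p)} (hv : ∀ i, v i ≠ 0) :
    relu =ᶠ[nhds v] reluDeriv v := by
  have hsign : ∀ i, ∀ᶠ w : EuclideanSpace ℝ (Fin p) in nhds v, (0 < w i ↔ 0 < v i) := by
    intro i
    have hcont : Continuous fun w : EuclideanSpace ℝ (Fin p) => w i :=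
      (EuclideanSpace.proj i).continuous
    rcases (hv i).lt_or_gt with hneg | hpos
    · filter_upwards [hcont.continuousAt.eventually_lt continuousAt_const hneg] with w hw
      exact iff_of_false hw.not_gt hneg.not_gt
    · filter_upwards [continuousAt_const.eventually_lt hcont.continuousAt hpos] with w hw
      exact iff_of_true hw hpos
  filter_upwards [Filter.eventually_all.2 hsign] with w hw
  ext i
  rw [reluDeriv_apply, if_congr (hw i).symm rfl rfl]
  simp only [relu]
  split_ifs with h
  · exact max_eq_left h.le
  · exact max_eq_right (not_lt.1 h)

lemma hasFDerivAt_relu {v : EuclideanSpace ℝ (Fin p)} (hv : ∀ i, v i ≠ 0) :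
    HasFDerivAt relu (reluDeriv v) v :=
  (reluDeriv v).hasFDerivAt.congr_of_eventuallyEq (relu_eventuallyEq_reluDeriv hv)

end ReLU

lemma Finset.prod_filter_lt_succ {d : ℕ} {M : Type*} [CommMonoid M] (f : Fin d → M)
    (κ : Fin d) {j : ℕ} (hκj : (κ : ℕ) < j) (hj : j < d) :
    ∏ i ∈ Finset.univ.filter (fun i : Fin d => κ < i ∧ (i : ℕ) < j + 1), f i
      = f ⟨j, hj⟩ * ∏ i ∈ Finset.univ.filter (fun i : Fin d => κ < i ∧ (i : ℕ) < j), f i := by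
  rw [← Finset.prod_insert (by simp)]
  congr 1
  ext i
  simp only [Finset.mem_filter, Finset.mem_univ, true_and, Finset.mem_insert, Fin.lt_def,
    Fin.ext_iff]
  omega

namespace Params

variable {n H d : ℕ}

def updateW (P : Params n H d) (κ : Fin d)
    (M : Matrix (Fin (dim n H d (κ + 1))) (Fin (dim n H d κ)) ℝ) : Params n H d :=
  ⟨Function.update P.W κ M, P.b⟩

variable (P : Params n H d) (x : EuclideanSpace ℝ (Fin n)) (κ : Fin d)
  (M : Matrix (Fin (dim n H d (κ + 1))) (Fin (dim n H d κ)) ℝ)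

@[simp]
lemma updateW_self : P.updateW κ (P.W κ) = P := by
  simp [updateW]

lemma layer_updateW_of_le {j : ℕ} (hj : j ≤ d) (hjκ : j ≤ κ) :
    layer (P.updateW κ M) x j hj = layer P x j hj := by
  induction j with
  | zero => rfl
  | succ j ih =>
    have hne : (⟨j, hj⟩ : Fin d) ≠ κ := fun h => by rw [← h] at hjκ; simp at hjκ
    simp only [layer, ih (Nat.le_of_succ_le hj) (by omega)]
    simp only [updateW, Function.update_of_ne hne]

lemma layer_updateW_succ_self (hκ : (κ : ℕ) + 1 ≤ d) :
    layer (P.updateW κ M) x (κ + 1) hκ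
      = mulVecCLM (relu (layer P x κ κ.2.le)) M + P.b κ := by
  simp only [layer, layer_updateW_of_le P x κ M _ le_rfl]
  simp only [updateW, Fin.eta, Function.update_self]
  rfl

lemma layer_updateW_succ_of_ne {j : ℕ} (hj : j + 1 ≤ d) (hne : (⟨j, hj⟩ : Fin d) ≠ κ) :
    layer (P.updateW κ M) x (j + 1) hj
      = Matrix.toEuclideanLin (P.W ⟨j, hj⟩) (relu (layer (P.updateW κ M) x j (by omega)))
        + P.b ⟨j, hj⟩ := by
  simp only [layer, updateW, Function.update_of_ne hne]

end Params

section Gradient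

open Params

variable {n H d : ℕ} (P : Params n H d) (x : EuclideanSpace ℝ (Fin n)) (κ : Fin d)

lemma hasFDerivAt_layer_updateW_succ_self (hκ : (κ : ℕ) + 1 ≤ d) :
    HasFDerivAt (fun M => layer (P.updateW κ M) x (κ + 1) hκ)
      (mulVecCLM (relu (layer P x κ κ.2.le))) (P.W κ) := by
  rw [funext (layer_updateW_succ_self P x κ · hκ)]
  exact (mulVecCLM (relu (layer P x κ κ.2.le))).hasFDerivAt.add_const (P.b κ)

lemma HasFDerivAt.layer_updateW_succ {j : ℕ} (hj : j + 1 ≤ d) (hne : (⟨j, hj⟩ : Fin d) ≠ κ)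
    (hv : ∀ i, layer P x j (by omega) i ≠ 0)
    {f' : Matrix (Fin (dim n H d (κ + 1))) (Fin (dim n H d κ)) ℝ →L[ℝ]
      EuclideanSpace ℝ (Fin (dim n H d j))}
    (hf : HasFDerivAt (fun M => layer (P.updateW κ M) x j (by omega)) f' (P.W κ)) :
    HasFDerivAt (fun M => layer (P.updateW κ M) x (j + 1) hj)
      ((Matrix.toEuclideanLin (P.W ⟨j, hj⟩)).toContinuousLinearMap.comp
        ((reluDeriv (layer P x j (by omega))).comp f')) (P.W κ) := by
  rw [funext (layer_updateW_succ_of_ne P x κ · hj hne)]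
  have hrelu : HasFDerivAt relu (reluDeriv (layer P x j (by omega)))
      (layer (P.updateW κ (P.W κ)) x j (by omega)) := by
    rw [updateW_self]
    exact hasFDerivAt_relu hv
  exact (((Matrix.toEuclideanLin (P.W ⟨j, hj⟩)).toContinuousLinearMap.hasFDerivAt.comp (P.W κ)
    (hrelu.comp (P.W κ) hf)).add_const (P.b ⟨j, hj⟩) :)

lemma exists_hasFDerivAt_layer_updateW {j : ℕ} (hκj : (κ : ℕ) + 1 ≤ j) (hj : j ≤ d)
    (hpattern : ∀ i (hi : i ≤ d), (κ : ℕ) < i → i < j → ∀ c, layer P x i hi c ≠ 0) :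
    ∃ f' : Matrix (Fin (dim n H d (κ + 1))) (Fin (dim n H d κ)) ℝ →L[ℝ]
        EuclideanSpace ℝ (Fin (dim n H d j)),
      HasFDerivAt (fun M => layer (P.updateW κ M) x j hj) f' (P.W κ) ∧
      ‖f'‖ₒₚ ≤ (∏ i ∈ Finset.univ.filter (fun i : Fin d => κ < i ∧ (i : ℕ) < j), spec (P.W i))
        * ‖relu (layer P x κ κ.2.le)‖ := by
  induction j, hκj using Nat.le_induction with
  | base =>
    refine ⟨_, hasFDerivAt_layer_updateW_succ_self P x κ hj, ?_⟩
    have hempty : Finset.univ.filter (fun i : Fin d => κ < i ∧ (i : ℕ) < κ + 1) = ∅ := by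
      ext i
      simp only [Finset.mem_filter, Finset.mem_univ, true_and, Finset.notMem_empty, iff_false,
        Fin.lt_def]
      omega
    rw [hempty, Finset.prod_empty, one_mul]
    exact norm_mulVecCLM_le _
  | succ j hκj ih =>
    obtain ⟨f', hf, hbound⟩ :=
      ih (by omega) fun i hi hκi hij => hpattern i hi hκi (Nat.lt_succ_of_lt hij)
    have hne : (⟨j, hj⟩ : Fin d) ≠ κ := fun h => by rw [← h] at hκj; simp at hκj
    have hv := hpattern j (by omega) (by omega) j.lt_succ_self
    refine ⟨_, hf.layer_updateW_succ P x κ hj hne hv, ?_⟩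
    rw [Finset.prod_filter_lt_succ _ κ (by omega) hj, mul_assoc]
    calc _ ≤ spec (P.W ⟨j, hj⟩) * (‖reluDeriv (layer P x j (by omega))‖ * ‖f'‖ₒₚ) :=
          (ContinuousLinearMap.opNorm_comp_le _ _).trans
            (mul_le_mul_of_nonneg_left (ContinuousLinearMap.opNorm_comp_le _ _) (norm_nonneg _))
      _ ≤ spec (P.W ⟨j, hj⟩) * (1 * ‖f'‖ₒₚ) :=
          mul_le_mul_of_nonneg_left
            (mul_le_mul_of_nonneg_right (norm_reluDeriv_le _) (norm_nonneg _)) (norm_nonneg _)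
      _ ≤ _ := by rw [one_mul]; exact mul_le_mul_of_nonneg_left hbound (norm_nonneg _)

end Gradient

lemma exists_hasFDerivAt_netOut_updateW {n H d : ℕ} (hd : 0 < d) (P : Params n H d)
    (x : EuclideanSpace ℝ (Fin n)) (κ : Fin d)
    (hpattern : ∀ j (hj : j ≤ d), (κ : ℕ) < j → j < d → ∀ i, layer P x j hj i ≠ 0) :
    ∃ g' : Matrix (Fin (dim n H d (κ + 1))) (Fin (dim n H d κ)) ℝ →L[ℝ] ℝ,
      HasFDerivAt (fun M => netOut hd (P.updateW κ M) x) g' (P.W κ) ∧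
      ‖g'‖ₒₚ ≤ (∏ j ∈ Finset.univ.filter (fun j : Fin d => κ < j), spec (P.W j))
        * ‖layer P x κ κ.2.le‖ := by
  obtain ⟨f', hf, hbound⟩ := exists_hasFDerivAt_layer_updateW P x κ κ.2 le_rfl hpattern
  let i₀ : Fin (dim n H d d) := ⟨0, by rw [dim_last hd]; omega⟩
  have hproj : ‖EuclideanSpace.proj (𝕜 := ℝ) i₀‖ ≤ 1 :=
    ContinuousLinearMap.opNorm_le_bound _ zero_le_one fun v => by
      simpa using PiLp.norm_apply_le v i₀
  have hderiv := (EuclideanSpace.proj i₀).hasFDerivAt.comp (P.W κ) hf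
  refine ⟨_, hderiv, ?_⟩
  have hfilter : Finset.univ.filter (fun j : Fin d => κ < j ∧ (j : ℕ) < d)
      = Finset.univ.filter (fun j : Fin d => κ < j) := by
    simp
  calc _ ≤ 1 * ‖f'‖ₒₚ :=
        (ContinuousLinearMap.opNorm_comp_le _ _).trans
          (mul_le_mul_of_nonneg_right hproj (norm_nonneg _))
    _ ≤ _ := by
      rw [one_mul, ← hfilter]
      exact hbound.trans (mul_le_mul_of_nonneg_left (norm_relu_le _)
        (Finset.prod_nonneg fun j _ => norm_nonneg _))

lemma prod_spec_filter_lt_le_pow {n H d : ℕ} (P : Params n H d) (κ : Fin d) {t : ℝ}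
    (ht : ∀ k, spec (P.W k) ≤ t) :
    ∏ j ∈ Finset.univ.filter (fun j : Fin d => κ < j), spec (P.W j) ≤ t ^ (d - 1 - (κ : ℕ)) := by
  calc _ ≤ ∏ _j ∈ Finset.univ.filter (fun j : Fin d => κ < j), t :=
        Finset.prod_le_prod (fun j _ => norm_nonneg _) fun j _ => ht j
    _ = t ^ (d - 1 - (κ : ℕ)) := by
        rw [Finset.prod_const, Finset.filter_lt_eq_Ioi, Fin.card_Ioi]

theorem stmt11_general {n H d : ℕ} (hd : 0 < d) (P : Params n H d)
    (x : EuclideanSpace ℝ (Fin n))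
    (κ : Fin d)
    (hpattern : ∀ (j : ℕ), (κ : ℕ) + 1 ≤ j → j ≤ d - 1 → ∀ (hj : j ≤ d)
      (i : Fin (dim n H d j)), layer P x j hj i ≠ 0)
    (G : Matrix (Fin (dim n H d ((κ : ℕ) + 1))) (Fin (dim n H d κ)) ℝ → ℝ)
    (hG : ∀ M, G M = netOut hd ⟨Function.update P.W κ M, P.b⟩ x) :
    DifferentiableAt ℝ G (P.W κ) ∧
      @Norm.norm _ ContinuousLinearMap.hasOpNorm (fderiv ℝ G (P.W κ))
        ≤ (∏ j ∈ Finset.univ.filter (fun j : Fin d => κ < j), spec (P.W j))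
            * ‖layer P x κ (le_of_lt κ.2)‖ ∧
      ∀ (Z : Params n H d) (s r : ℝ), (∀ k, spec (Z.W k) ≤ s) → (∀ k, Z.b k = 0) →
        paramDist P Z ≤ r →
        @Norm.norm _ ContinuousLinearMap.hasOpNorm (fderiv ℝ G (P.W κ))
          ≤ (s + r) ^ (d - 1 - (κ : ℕ)) * ‖layer P x κ (le_of_lt κ.2)‖ := by
  obtain ⟨g', hg', hbound⟩ := exists_hasFDerivAt_netOut_updateW hd P x κ
    fun j hj hκj hjd => hpattern j hκj (by omega) hj
  have hG' : HasFDerivAt G g' (P.W κ) := by rwa [funext hG]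
  have hbound' : ‖fderiv ℝ G (P.W κ)‖ₒₚ ≤ _ := (congrArg _ hG'.fderiv).trans_le hbound
  refine ⟨hG'.differentiableAt, hbound', fun Z s r hZ _ hPZ => hbound'.trans ?_⟩
  gcongr
  exact prod_spec_filter_lt_le_pow P κ (spec_le_of_paramDist_le hZ hPZ)

/-- if the activation pattern is locally constant (all coordinates of
the layer outputs from layer `κ+1` up to `d-1` are nonzero), then the network output
is Fréchet differentiable in the `κ`-th weight matrix (domain equipped with the
Frobenius norm), and the operator norm of the derivative is bounded by the product
of the downstream spectral norms times `‖f^{(κ)}(x)‖`; in particular, within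
distance `r` of a spectrally `s`-bounded zero-bias initialization, by
`(s+r)^(d-1-κ) ‖f^{(κ)}(x)‖`, independently of the width `H`. -/
theorem stmt11 {n H d : ℕ} (hd : 0 < d) (P : Params n H d)
    (x : EuclideanSpace ℝ (Fin n))
    (κ : Fin d) (hκ : (κ : ℕ) + 1 ≤ d - 1)
    (hpattern : ∀ (j : ℕ), (κ : ℕ) + 1 ≤ j → j ≤ d - 1 → ∀ (hj : j ≤ d)
      (i : Fin (dim n H d j)), layer P x j hj i ≠ 0)
    (G : Matrix (Fin (dim n H d ((κ : ℕ) + 1))) (Fin (dim n H d κ)) ℝ → ℝ)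
    (hG : ∀ M, G M = netOut hd ⟨Function.update P.W κ M, P.b⟩ x) :
    DifferentiableAt ℝ G (P.W κ) ∧
      @Norm.norm _ ContinuousLinearMap.hasOpNorm (fderiv ℝ G (P.W κ))
        ≤ (∏ j ∈ Finset.univ.filter (fun j : Fin d => κ < j), spec (P.W j))
            * ‖layer P x κ (le_of_lt κ.2)‖ ∧
      ∀ (Z : Params n H d) (s r : ℝ), (∀ k, spec (Z.W k) ≤ s) → (∀ k, Z.b k = 0) →
        paramDist P Z ≤ r →
        @Norm.norm _ ContinuousLinearMap.hasOpNorm (fderiv ℝ G (P.W κ))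
          ≤ (s + r) ^ (d - 1 - (κ : ℕ)) * ‖layer P x κ (le_of_lt κ.2)‖ :=
  stmt11_general hd P x κ hpattern G hG
end
end
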